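/- arXiv:0706.4454 — 2 statements merged into one kernel-verified Lean document; each statement's English description precedes it below -/
import Mathlib

section
/- Let Δ > 0, Ω, D be real numbers with D ≥ 0, and let T = 0. Then there is no pair of real numbers (η, v) satisfying the marginal stability system Dη² − 2ΔTη + 4Δ² − 4(v+Ω)² = 0 and (v+Ω)(4Δ − ηT) = 0. In particular, for two identical Lorentzian populations coupled by a matrix with zero trace and nonnegative determinant, the incoherent state never loses stability through a marginal mode, i.e., synchronization onset does not occur for any real coupling strength η. -/
/-- The marginal stability system for two identical Lorentzian populations with
width `Δ`, center `Ω`, coupling-matrix trace `T` and determinant `D`, at overall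
coupling `η` and marginal frequency `v`. -/
def MarginalSystem (Δ Ω T D η v : ℝ) : Prop :=
  D * η ^ 2 - 2 * Δ * T * η + 4 * Δ ^ 2 - 4 * (v + Ω) ^ 2 = 0
    ∧ (v + Ω) * (4 * Δ - η * T) = 0

/-- For `T = 0` and `D ≥ 0`, the marginal stability system has no real solution
`(η, v)`: synchronization onset never occurs for any coupling strength. -/
theorem no_marginal_solution_T_eq_zero_D_nonneg (Δ Ω D T : ℝ) (hΔ : 0 < Δ)
    (hD : 0 ≤ D) (hT : T = 0) :
    ¬ ∃ η v : ℝ, MarginalSystem Δ Ω T D η v := by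
  rintro ⟨η, v, h1, h2⟩
  subst hT
  have hv : v + Ω = 0 := by
    rcases mul_eq_zero.mp h2 with h | h
    · exact h
    · nlinarith
  rw [hv] at h1
  nlinarith [mul_nonneg hD (sq_nonneg η), sq_nonneg Δ]
end

section
/- Let Δ > 0, Ω, T, D be real numbers with T ≠ 0 and T² < 4D. Then every pair of real numbers (η, v) satisfying the marginal stability system Dη² − 2ΔTη + 4Δ² − 4(v+Ω)² = 0 and (v+Ω)(4Δ − ηT) = 0 has η = 4Δ/T. That is, when T² < 4D the critical coupling is uniquely η* = 4Δ/T. -/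
/-- For `T ≠ 0` and `T² < 4D`, every real solution `(η, v)` of the marginal stability
system has `η = 4Δ/T`: the critical coupling is unique. -/
theorem critical_coupling_unique_T_sq_lt_4D (Δ Ω T D : ℝ) (hΔ : 0 < Δ) (hT : T ≠ 0)
    (h : T ^ 2 < 4 * D) :
    ∀ η v : ℝ, MarginalSystem Δ Ω T D η v → η = 4 * Δ / T := by
  intro η v ⟨h1, h2⟩
  rcases mul_eq_zero.1 h2 with hv | he
  · exfalso
    rw [hv] at h1
    nlinarith [sq_nonneg (2*D*η - 2*Δ*T), sq_nonneg Δ, mul_pos hΔ hΔ]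
  · field_simp
    linarith
end
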